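/- Let G = (V,E) be a finite graph (multi-edges and loops allowed) with symmetric digraph Δ(G) = (V, 𝒜(G)), and let τ₁, τ₂: 𝒜(G) → ℂ with τ(a,a') := τ₁(a)τ₂(a'). Define the weight θ(a,a') := τ(a,a')·δ_{head(a),tail(a')} − δ_{a, inverse of a'}, and let M_θ be the 2|E|×2|E| edge matrix (θ(a,a'))_{a,a'}. Then det(I − t·M_θ) = (1−t²)^{|E|−|V|} · det(I − t·A_G^θ + t²·(D_G^θ − I)), where A_G^θ = (Σ_{a ∈ 𝒜_{uv}} τ(a,a))_{u,v∈V} and D_G^θ is the diagonal matrix with (u,u)-entry Σ_{a: tail(a)=u} τ(a⁻¹, a). -/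
import Mathlib

set_option maxHeartbeats 1000000
set_option synthInstance.maxHeartbeats 400000

theorem aux_pairing {A : Type} [Fintype A] [DecidableEq A] (inv : A → A)
    (hinv : ∀ a, inv (inv a) = a) (hfix : ∀ a, inv a ≠ a) :
    ∃ (B : Type) (_ : Fintype B) (e : Fin 2 × B ≃ A),
      (∀ b : B, inv (e (0, b)) = e (1, b)) ∧ (∀ b : B, inv (e (1, b)) = e (0, b)) := by
  classical
  let idx : A ≃ Fin (Fintype.card A) := Fintype.equivFin A
  have hne : ∀ a : A, idx a ≠ idx (inv a) := fun a h => hfix a (idx.injective h.symm)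
  let B := {a : A // idx a < idx (inv a)}
  let f : Fin 2 × B → A := fun p => if p.1 = 0 then (p.2 : A) else inv p.2
  have hbij : Function.Bijective f := by
    constructor
    · rintro ⟨i, b, hb⟩ ⟨j, c, hc⟩ h
      fin_cases i <;> fin_cases j <;> simp [f] at h ⊢
      · exact Subtype.ext h
      · subst h
        rw [hinv] at hb
        exact absurd hc (lt_asymm hb)
      · subst h
        rw [hinv] at hc
        exact absurd hb (lt_asymm hc)
      · have h2 := congrArg inv h
        rw [hinv, hinv] at h2
        exact Subtype.ext h2
    · intro a
      by_cases h : idx a < idx (inv a)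
      · exact ⟨(0, ⟨a, h⟩), by simp [f]⟩
      · have h1 : idx (inv a) < idx (inv (inv a)) := by
          rw [hinv]
          exact lt_of_le_of_ne (not_lt.mp h) (hne a).symm
        exact ⟨(1, ⟨inv a, h1⟩), by simp [f, hinv]⟩
  refine ⟨B, inferInstance, Equiv.ofBijective f hbij, ?_, ?_⟩
  · intro b; simp [Equiv.ofBijective_apply, f]
  · intro b; simp [Equiv.ofBijective_apply, f, hinv]

theorem aux_detJ {A : Type} [Fintype A] [DecidableEq A] (inv : A → A)
    (hinv : ∀ a, inv (inv a) = a) (hfix : ∀ a, inv a ≠ a) (m : ℕ)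
    (hm : Fintype.card A = 2 * m) {R : Type} [CommRing R] (r : R) :
    (1 + r • (Matrix.of fun a a' : A => if a' = inv a then (1:R) else 0)).det
      = (1 - r ^ 2) ^ m := by
  classical
  obtain ⟨B, hB, e, h0, h1⟩ := aux_pairing inv hinv hfix
  have hcard : Fintype.card B = m := by
    have h := Fintype.card_congr e
    simp [Fintype.card_prod] at h
    omega
  rw [← Matrix.det_submatrix_equiv_self e]
  have hsub : (1 + r • (Matrix.of fun a a' : A => if a' = inv a then (1:R) else 0)).submatrix e e
      = Matrix.blockDiagonal (fun _ : B => Matrix.of fun i j : Fin 2 => if i = j then (1:R) else r) := by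
    ext ⟨i, b⟩ ⟨j, c⟩
    fin_cases i <;> fin_cases j <;>
      by_cases hbc : b = c <;>
      simp [Matrix.submatrix_apply, Matrix.one_apply, Matrix.blockDiagonal_apply, h0, h1,
        e.injective.eq_iff, Prod.mk.injEq, hbc] <;>
      exact fun h => absurd h.symm hbc
  rw [hsub, Matrix.det_blockDiagonal]
  have hdet2 : (Matrix.of fun i j : Fin 2 => if i = j then (1:R) else r).det = 1 - r ^ 2 := by
    rw [Matrix.det_fin_two]
    simp
    ring
  rw [hdet2, Finset.prod_const, Finset.card_univ, hcard]


set_option maxHeartbeats 4000000 in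
/-- Ihara expression of the weighted zeta function of a graph `G`
(multi-edges and loops allowed), via its symmetric digraph: the arcs come in
inverse pairs (a fixed-point-free involution `inv` swapping head and tail),
`|𝒜| = 2|E|`, and
`det(I − t M_θ) = (1−t²)^{|E|−|V|} · det(I − t A_G^θ + t²(D_G^θ − I))`
as an identity of rational functions in `t`. -/
theorem stmt_9 {V A : Type} [Fintype V] [Fintype A] [DecidableEq V] [DecidableEq A]
    (head tail : A → V) (inv : A → A)
    (hinv : ∀ a, inv (inv a) = a) (hfix : ∀ a, inv a ≠ a)
    (htl : ∀ a, tail (inv a) = head a) (hhd : ∀ a, head (inv a) = tail a)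
    (m : ℕ) (hm : Fintype.card A = 2 * m) (τ₁ τ₂ : A → ℂ) :
    (1 - (RatFunc.X : RatFunc ℂ) • (Matrix.of fun a a' : A =>
        RatFunc.C (τ₁ a * τ₂ a') * (if head a = tail a' then 1 else 0) -
          (if a' = inv a then 1 else 0))).det =
      (1 - (RatFunc.X : RatFunc ℂ) ^ 2) ^ ((m : ℤ) - (Fintype.card V : ℤ)) *
        (1 - (RatFunc.X : RatFunc ℂ) • (Matrix.of fun u v : V =>
              ∑ a ∈ Finset.univ.filter (fun a : A => tail a = u ∧ head a = v),
                RatFunc.C (τ₁ a * τ₂ a))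
          + ((RatFunc.X : RatFunc ℂ) ^ 2) •
            ((Matrix.of fun u v : V =>
              if u = v then
                ∑ a ∈ Finset.univ.filter (fun a : A => tail a = u),
                  RatFunc.C (τ₁ (inv a) * τ₂ a)
              else 0) - 1)).det := by
  classical
  set t : RatFunc ℂ := RatFunc.X with ht
  set A' : Matrix V V (RatFunc ℂ) := Matrix.of fun u v : V =>
      ∑ a ∈ Finset.univ.filter (fun a : A => tail a = u ∧ head a = v),
        RatFunc.C (τ₁ a * τ₂ a) with hA'
  set D' : Matrix V V (RatFunc ℂ) := Matrix.of fun u v : V =>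
      if u = v then
        ∑ a ∈ Finset.univ.filter (fun a : A => tail a = u),
          RatFunc.C (τ₁ (inv a) * τ₂ a)
      else 0 with hD'
  set S : Matrix A V (RatFunc ℂ) :=
    Matrix.of fun a v => if head a = v then RatFunc.C (τ₁ a) else 0 with hS
  set T : Matrix V A (RatFunc ℂ) :=
    Matrix.of fun v a => if tail a = v then RatFunc.C (τ₂ a) else 0 with hT
  set J : Matrix A A (RatFunc ℂ) :=
    Matrix.of fun a a' => if a' = inv a then (1 : RatFunc ℂ) else 0 with hJ
  have hc : (1 - t ^ 2 : RatFunc ℂ) ≠ 0 := by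
    have heq : (1 - t ^ 2 : RatFunc ℂ)
        = algebraMap (Polynomial ℂ) (RatFunc ℂ) (1 - Polynomial.X ^ 2) := by
      rw [map_sub, map_one, map_pow, RatFunc.algebraMap_X, ht]
    rw [heq]
    rw [map_ne_zero_iff _ (RatFunc.algebraMap_injective ℂ)]
    intro h
    have h0 := congrArg (Polynomial.eval 0) h
    simp at h0
  -- the edge matrix is S*T - J
  have hM : (Matrix.of fun a a' : A =>
      RatFunc.C (τ₁ a * τ₂ a') * (if head a = tail a' then 1 else 0) -
        (if a' = inv a then 1 else 0)) = S * T - J := by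
    ext a a'
    simp only [Matrix.of_apply, Matrix.sub_apply, Matrix.mul_apply, hS, hT, hJ]
    congr 1
    simp only [ite_mul, zero_mul, mul_ite, mul_zero]
    rw [Finset.sum_ite_eq Finset.univ (tail a')]
    simp [map_mul]
  have hJJ : J * J = 1 := by
    ext a a'
    simp only [hJ, Matrix.mul_apply, Matrix.of_apply, Matrix.one_apply, ite_mul, zero_mul, one_mul]
    rw [Finset.sum_ite_eq' Finset.univ (inv a)]
    simp [hinv, eq_comm]
  have hTS : T * S = A' := by
    ext u v
    rw [hA']
    simp only [Matrix.mul_apply, Matrix.of_apply, hS, hT]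
    rw [Finset.sum_filter]
    apply Finset.sum_congr rfl
    intro a _
    rw [ite_mul, zero_mul, mul_ite, mul_zero, ← ite_and, map_mul,
      mul_comm (RatFunc.C (τ₁ a))]
  have hJS : J * S = Matrix.of fun a v => if tail a = v then RatFunc.C (τ₁ (inv a)) else 0 := by
    ext a v
    simp only [Matrix.mul_apply, Matrix.of_apply, hJ, hS, ite_mul, zero_mul, one_mul]
    rw [Finset.sum_ite_eq' Finset.univ (inv a)]
    simp [hhd]
  have hTJS : T * (J * S) = D' := by
    rw [hJS, hD']
    ext u v
    simp only [Matrix.mul_apply, Matrix.of_apply, hT]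
    by_cases huv : u = v
    · subst huv
      rw [if_pos rfl, Finset.sum_filter]
      apply Finset.sum_congr rfl
      intro a _
      rw [ite_mul, zero_mul, mul_ite, mul_zero]
      split_ifs with h1
      · rw [map_mul, mul_comm]
      · rfl
    · rw [if_neg huv]
      apply Finset.sum_eq_zero
      intro a _
      rw [ite_mul, zero_mul, mul_ite, mul_zero]
      split_ifs with h1 h2
      · exact absurd (h1.symm.trans h2) huv
      · rfl
      · rfl
  -- inverse of 1 + t•J
  have hmulJ : ((1 : Matrix A A (RatFunc ℂ)) + t • J) * (1 - t • J) = (1 - t ^ 2) • 1 := by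
    rw [mul_sub, mul_one, add_mul, one_mul, Matrix.mul_smul, Matrix.smul_mul, smul_smul, hJJ]
    rw [sub_smul, one_smul, pow_two]
    abel
  have hNinv : ((1 : Matrix A A (RatFunc ℂ)) + t • J) *
      ((1 - t ^ 2)⁻¹ • ((1 : Matrix A A (RatFunc ℂ)) - t • J)) = 1 := by
    rw [Matrix.mul_smul, hmulJ, smul_smul, inv_mul_cancel₀ hc, one_smul]
  set N : Matrix A A (RatFunc ℂ) := (1 - t ^ 2)⁻¹ • ((1 : Matrix A A (RatFunc ℂ)) - t • J) with hN
  have key1 : (1 : Matrix A A (RatFunc ℂ)) - t • (S * T - J)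
      = ((1 : Matrix A A (RatFunc ℂ)) + t • J) * (1 - N * (t • (S * T))) := by
    rw [mul_sub, mul_one, ← mul_assoc, hNinv, one_mul, smul_sub]
    abel
  have e0 : ((1 : Matrix A A (RatFunc ℂ)) - t • J) * (t • S) = t • S - (t * t) • (J * S) := by
    rw [Matrix.sub_mul, Matrix.one_mul, Matrix.smul_mul, Matrix.mul_smul, smul_smul]
  have e1 : N * (t • S) = (1 - t ^ 2)⁻¹ • (t • S - (t * t) • (J * S)) := by
    rw [hN, Matrix.smul_mul, e0]
  have hTNS : T * (N * (t • S)) = (1 - t ^ 2)⁻¹ • (t • A' - (t * t) • D') := by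
    rw [e1, Matrix.mul_smul, Matrix.mul_sub, Matrix.mul_smul, Matrix.mul_smul, hTS, hTJS]
  have hmid : (1 : Matrix V V (RatFunc ℂ)) - T * (N * (t • S))
      = (1 - t ^ 2)⁻¹ • ((1 : Matrix V V (RatFunc ℂ)) - t • A'
          + t ^ 2 • (D' - (1 : Matrix V V (RatFunc ℂ)))) := by
    rw [hTNS]
    have h1 : (1 : Matrix V V (RatFunc ℂ))
        = (1 - t ^ 2)⁻¹ • ((1 - t ^ 2) • (1 : Matrix V V (RatFunc ℂ))) := by
      rw [smul_smul, inv_mul_cancel₀ hc, one_smul]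
    conv_lhs => rw [h1]
    rw [← smul_sub]
    congr 1
    rw [sub_smul, one_smul, smul_sub, show t * t = t ^ 2 from (sq t).symm]
    abel
  -- put it together
  rw [hM, key1, Matrix.det_mul]
  rw [show ((1 : Matrix A A (RatFunc ℂ)) + t • J).det = (1 - t ^ 2) ^ m from by
    rw [hJ]; exact aux_detJ inv hinv hfix m hm t]
  have hassoc : N * (t • (S * T)) = (N * (t • S)) * T := by
    rw [← Matrix.smul_mul, ← Matrix.mul_assoc]
  rw [hassoc, Matrix.det_one_sub_mul_comm, hmid, Matrix.det_smul]
  have hz : ((1 : RatFunc ℂ) - t ^ 2) ^ ((m : ℤ) - (Fintype.card V : ℤ))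
      = (1 - t ^ 2) ^ m * ((1 - t ^ 2)⁻¹) ^ (Fintype.card V) := by
    rw [zpow_sub₀ hc, zpow_natCast, zpow_natCast, div_eq_mul_inv, inv_pow]
  rw [hz]
  ring
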